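/- For integers ℓ ≥ 1 and k ≥ 2, the star ℓ-set transposition graph ST^ℓ_k is vertex-transitive: for any two vertices u and v there is a graph automorphism of ST^ℓ_k mapping u to v. -/
import Mathlib


/-- An ℓ-set permutation: a string of length `k * l` over the alphabet `Fin k`
in which every symbol occurs exactly `l` times. -/
abbrev LSetPerm (k l : ℕ) : Type :=
  {v : Fin (k * l) → Fin k // ∀ j : Fin k, (Finset.univ.filter fun x => v x = j).card = l}

/-- The star ℓ-set transposition graph `ST^ℓ_k`: vertices are the ℓ-set permutations,
with `v` adjacent to `w` iff `w` is obtained from `v` by transposing the first entry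
with an entry of differing value. -/
def STGraph (k l : ℕ) [NeZero (k * l)] : SimpleGraph (LSetPerm k l) :=
  SimpleGraph.fromRel fun v w =>
    ∃ h : Fin (k * l), h ≠ 0 ∧ v.1 h ≠ v.1 0 ∧ w.1 = v.1 ∘ (Equiv.swap 0 h)

section Aux

variable {k l : ℕ} [NeZero (k * l)]

/-- Composing an ℓ-set permutation with a symbol permutation `π` and a position
permutation `σ` preserves the multiplicity condition. -/
lemma count_comp (π : Equiv.Perm (Fin k)) (σ : Equiv.Perm (Fin (k * l)))
    (x : LSetPerm k l) (j : Fin k) :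
    (Finset.univ.filter fun p => π (x.1 (σ p)) = j).card = l := by
  calc (Finset.univ.filter fun p => π (x.1 (σ p)) = j).card
      = Fintype.card {p : Fin (k * l) // π (x.1 (σ p)) = j} :=
        (Fintype.card_subtype _).symm
    _ = Fintype.card {q : Fin (k * l) // x.1 q = π.symm j} :=
        Fintype.card_congr
          (σ.subtypeEquiv fun a => by
            constructor
            · intro h; rwa [Equiv.apply_eq_iff_eq_symm_apply] at h
            · intro h; rw [h]; exact π.apply_symm_apply j)
    _ = (Finset.univ.filter fun q => x.1 q = π.symm j).card := Fintype.card_subtype _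
    _ = l := x.2 _

/-- The vertex map given by a symbol permutation and a position permutation. -/
noncomputable def symPos (π : Equiv.Perm (Fin k)) (σ : Equiv.Perm (Fin (k * l))) :
    LSetPerm k l ≃ LSetPerm k l where
  toFun x := ⟨fun p => π (x.1 (σ p)), count_comp π σ x⟩
  invFun x := ⟨fun p => π.symm (x.1 (σ.symm p)), count_comp π.symm σ.symm x⟩
  left_inv x := Subtype.ext (funext fun p => by simp)
  right_inv x := Subtype.ext (funext fun p => by simp)

lemma symPos_symm_apply (π : Equiv.Perm (Fin k)) (σ : Equiv.Perm (Fin (k * l)))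
    (x : LSetPerm k l) : symPos π.symm σ.symm x = (symPos π σ).symm x := rfl

lemma symPos_rel (π : Equiv.Perm (Fin k)) (σ : Equiv.Perm (Fin (k * l)))
    (hσ : σ 0 = 0) {x y : LSetPerm k l}
    (hxy : ∃ h : Fin (k * l), h ≠ 0 ∧ x.1 h ≠ x.1 0 ∧ y.1 = x.1 ∘ (Equiv.swap 0 h)) :
    ∃ h : Fin (k * l), h ≠ 0 ∧ (symPos π σ x).1 h ≠ (symPos π σ x).1 0 ∧
      (symPos π σ y).1 = (symPos π σ x).1 ∘ (Equiv.swap 0 h) := by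
  obtain ⟨h, h0, hne, heq⟩ := hxy
  refine ⟨σ.symm h, ?_, ?_, ?_⟩
  · intro hc
    apply h0
    have := congrArg σ hc
    rw [σ.apply_symm_apply, hσ] at this
    exact this
  · simp only [symPos, Equiv.coe_fn_mk, σ.apply_symm_apply, hσ]
    intro hc
    exact hne (π.injective hc)
  · funext p
    simp only [symPos, Equiv.coe_fn_mk, Function.comp_apply, heq]
    congr 2
    have key : Equiv.swap (0 : Fin (k * l)) h = σ * Equiv.swap 0 (σ.symm h) * σ⁻¹ := by
      have := Equiv.swap_apply_apply σ 0 (σ.symm h)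
      rwa [hσ, σ.apply_symm_apply] at this
    rw [key]
    simp [Equiv.Perm.mul_apply]

lemma symPos_adj (π : Equiv.Perm (Fin k)) (σ : Equiv.Perm (Fin (k * l)))
    (hσ : σ 0 = 0) {x y : LSetPerm k l} (hadj : (STGraph k l).Adj x y) :
    (STGraph k l).Adj (symPos π σ x) (symPos π σ y) := by
  rw [STGraph, SimpleGraph.fromRel_adj] at hadj ⊢
  obtain ⟨hne, hor⟩ := hadj
  refine ⟨fun hc => hne ((symPos π σ).injective hc), ?_⟩
  cases hor with
  | inl h => exact Or.inl (symPos_rel π σ hσ h)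
  | inr h => exact Or.inr (symPos_rel π σ hσ h)

/-- The graph automorphism induced by a symbol permutation and a position
permutation fixing position `0`. -/
noncomputable def symPosIso (π : Equiv.Perm (Fin k)) (σ : Equiv.Perm (Fin (k * l)))
    (hσ : σ 0 = 0) : STGraph k l ≃g STGraph k l where
  toEquiv := symPos π σ
  map_rel_iff' := by
    intro x y
    constructor
    · intro hadj
      have hσ' : σ.symm 0 = 0 := σ.symm_apply_eq.mpr hσ.symm
      have := symPos_adj π.symm σ.symm hσ' hadj
      rwa [symPos_symm_apply, symPos_symm_apply, Equiv.symm_apply_apply,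
        Equiv.symm_apply_apply] at this
    · exact symPos_adj π σ hσ

end Aux

/-- `ST^ℓ_k` is vertex-transitive: any vertex can be mapped to any other
by a graph automorphism. -/
theorem ST_vertexTransitive (k l : ℕ) (hl : 1 ≤ l) (hk : 2 ≤ k) :
    letI : NeZero (k * l) := ⟨Nat.mul_ne_zero (by omega) (by omega)⟩
    ∀ u v : LSetPerm k l, ∃ φ : STGraph k l ≃g STGraph k l, φ u = v := by
  letI : NeZero (k * l) := ⟨Nat.mul_ne_zero (by omega) (by omega)⟩
  intro u v
  set π : Equiv.Perm (Fin k) := Equiv.swap (u.1 0) (v.1 0) with hπ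
  set w : Fin (k * l) → Fin k := fun p => π (u.1 p) with hw
  have hw0 : w 0 = v.1 0 := by
    simp [hw, hπ, Equiv.swap_apply_left]
  -- fibers of w and v.1 have the same cardinality
  have hcard : ∀ j : Fin k,
      Fintype.card {a : Fin (k * l) // v.1 a = j} = Fintype.card {b : Fin (k * l) // w b = j} := by
    intro j
    rw [Fintype.card_subtype, Fintype.card_subtype, v.2 j]
    exact (count_comp π (Equiv.refl _) u j).symm
  set σ0 : Fin (k * l) ≃ Fin (k * l) :=
    Equiv.ofFiberEquiv (f := v.1) (g := w) (fun j => Fintype.equivOfCardEq (hcard j)) with hσ0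
  have hσ0map : ∀ a, w (σ0 a) = v.1 a := fun a =>
    Equiv.ofFiberEquiv_map (fun j => Fintype.equivOfCardEq (hcard j)) a
  set σ : Fin (k * l) ≃ Fin (k * l) := σ0.trans (Equiv.swap 0 (σ0 0)) with hσdef
  have hσ : σ 0 = 0 := by
    simp [hσdef, Equiv.swap_apply_right]
  have hwσ00 : w (σ0 0) = w 0 := by
    rw [hσ0map 0, hw0]
  have hσmap : ∀ a, w (σ a) = v.1 a := by
    intro a
    rw [show σ a = Equiv.swap 0 (σ0 0) (σ0 a) from rfl]
    rcases eq_or_ne (σ0 a) 0 with h1 | h1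
    · rw [h1, Equiv.swap_apply_left, hwσ00, ← h1, hσ0map]
    · rcases eq_or_ne (σ0 a) (σ0 0) with h2 | h2
      · rw [h2, Equiv.swap_apply_right, ← hwσ00, ← h2, hσ0map]
      · rw [Equiv.swap_apply_of_ne_of_ne h1 h2, hσ0map]
  refine ⟨symPosIso π σ hσ, ?_⟩
  apply Subtype.ext
  funext p
  exact hσmap p
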